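/- arXiv:1905.05611 — 2 statements merged into one kernel-verified Lean document; each statement's English description precedes it below -/
import Mathlib

section
/- Suppose (p_j) ⊂ (0,1) is non-increasing and s(n+1) = s(n)+1 with s := s(n). Then V(n+1) = V(n) if and only if p_s = p_{n+1} or R(s+1,n) = 1. -/
noncomputable def Rsum (p : ℕ → ℝ) (k n : ℕ) : ℝ := ∑ j ∈ Finset.Icc k n, p j / (1 - p j)

noncomputable def Qprod (p : ℕ → ℝ) (k n : ℕ) : ℝ := ∏ j ∈ Finset.Icc k n, (1 - p j)

open scoped Classical in
noncomputable def thr (p : ℕ → ℝ) (n : ℕ) : ℕ :=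
  if Rsum p 1 n ≤ 1 then 1 else Nat.findGreatest (fun k => 1 ≤ Rsum p k n) n

noncomputable def Val (p : ℕ → ℝ) (n : ℕ) : ℝ := Qprod p (thr p n) n * Rsum p (thr p n) n

/-! Moving the threshold from `s` to `s + 1` while appending the index `n + 1` changes the value
`Q · R` by `Q(s+1,n) (p_s - p_{n+1}) (R(s+1,n) - 1)`; since `Q(s+1,n) > 0`, the value is unchanged
exactly when one of the other two factors vanishes. -/

open Finset

theorem thr_succ_le (p : ℕ → ℝ) (n : ℕ) : thr p (n + 1) ≤ n + 1 := by
  unfold thr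
  split_ifs
  · omega
  · exact Nat.findGreatest_le _

section
variable (p : ℕ → ℝ) {k n : ℕ}

theorem Qprod_eq_mul_Qprod_succ_left (hkn : k ≤ n) :
    Qprod p k n = (1 - p k) * Qprod p (k + 1) n := by
  rw [Qprod, Qprod, Icc_eq_cons_Ioc hkn, prod_cons, Icc_add_one_left_eq_Ioc]

theorem Rsum_eq_add_Rsum_succ_left (hkn : k ≤ n) :
    Rsum p k n = p k / (1 - p k) + Rsum p (k + 1) n := by
  rw [Rsum, Rsum, Icc_eq_cons_Ioc hkn, sum_cons, Icc_add_one_left_eq_Ioc]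

theorem Qprod_succ_right (hkn : k ≤ n + 1) :
    Qprod p k (n + 1) = Qprod p k n * (1 - p (n + 1)) :=
  prod_Icc_succ_top hkn _

theorem Rsum_succ_right (hkn : k ≤ n + 1) :
    Rsum p k (n + 1) = Rsum p k n + p (n + 1) / (1 - p (n + 1)) :=
  sum_Icc_succ_top hkn _

variable {p}

theorem Qprod_pos (hp1 : ∀ j, p j < 1) (k n : ℕ) : 0 < Qprod p k n :=
  prod_pos fun j _ => sub_pos.mpr (hp1 j)

theorem Val_succ_sub_Val (hp1 : ∀ j, p j < 1) {s : ℕ}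
    (hsn : thr p n = s) (hsn1 : thr p (n + 1) = s + 1) :
    Val p (n + 1) - Val p n =
      Qprod p (s + 1) n * (p s - p (n + 1)) * (Rsum p (s + 1) n - 1) := by
  have hsle : s ≤ n := by have := thr_succ_le p n; omega
  have hqs : 1 - p s ≠ 0 := (sub_pos.mpr (hp1 s)).ne'
  have hqn : 1 - p (n + 1) ≠ 0 := (sub_pos.mpr (hp1 (n + 1))).ne'
  rw [Val, Val, hsn, hsn1, Qprod_eq_mul_Qprod_succ_left p hsle,
    Rsum_eq_add_Rsum_succ_left p hsle, Qprod_succ_right p (by omega), Rsum_succ_right p (by omega)]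
  field_simp
  ring

end

theorem stmt_11_general (p : ℕ → ℝ) (hp1 : ∀ j, p j < 1) (n s : ℕ)
    (hsn : thr p n = s) (hsn1 : thr p (n + 1) = s + 1) :
    Val p (n + 1) = Val p n ↔ (p s = p (n + 1) ∨ Rsum p (s + 1) n = 1) := by
  rw [← sub_eq_zero, Val_succ_sub_Val hp1 hsn hsn1, mul_eq_zero, mul_eq_zero, sub_eq_zero,
    sub_eq_zero]
  simp only [(Qprod_pos hp1 _ _).ne', false_or]

theorem stmt_11 (p : ℕ → ℝ) (hp0 : ∀ j, 0 < p j) (hp1 : ∀ j, p j < 1)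
    (hmono : ∀ j, p (j + 1) ≤ p j) (n s : ℕ)
    (hsn : thr p n = s) (hsn1 : thr p (n + 1) = s + 1) :
    Val p (n + 1) = Val p n ↔ (p s = p (n + 1) ∨ Rsum p (s + 1) n = 1) :=
  stmt_11_general p hp1 n s hsn hsn1
end

section
/- If (p_j) ⊂ (0,1) is non-decreasing and s(n+1) = s(n)+1 with s := s(n), and R(s,n) ≥ 1, then Q(s+1,n+1)·R(s+1,n+1) ≥ Q(s,n)·R(s,n), i.e. V(n+1) ≥ V(n) in this case. -/
lemma prod_one_sub_mul_sum_div_insert {ι : Type*} [DecidableEq ι] (p : ι → ℝ) {S : Finset ι}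
    {j : ι} (hj : j ∉ S) (hq : 1 - p j ≠ 0) :
    (∏ i ∈ insert j S, (1 - p i)) * ∑ i ∈ insert j S, p i / (1 - p i) =
      (∏ i ∈ S, (1 - p i)) * (p j + (1 - p j) * ∑ i ∈ S, p i / (1 - p i)) := by
  rw [Finset.prod_insert hj, Finset.sum_insert hj]
  field_simp

lemma Qprod_mul_Rsum_eq_of_le (p : ℕ → ℝ) {s n : ℕ} (h : s ≤ n) (hq : 1 - p s ≠ 0) :
    Qprod p s n * Rsum p s n = Qprod p (s + 1) n * (p s + (1 - p s) * Rsum p (s + 1) n) := by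
  unfold Qprod Rsum
  rw [← Finset.insert_Icc_add_one_left_eq_Icc h]
  exact prod_one_sub_mul_sum_div_insert p (by simp) hq

lemma Qprod_mul_Rsum_succ_right (p : ℕ → ℝ) {k n : ℕ} (h : k ≤ n + 1) (hq : 1 - p (n + 1) ≠ 0) :
    Qprod p k (n + 1) * Rsum p k (n + 1) =
      Qprod p k n * (p (n + 1) + (1 - p (n + 1)) * Rsum p k n) := by
  unfold Qprod Rsum
  rw [← Finset.insert_Icc_right_eq_Icc_add_one h]
  exact prod_one_sub_mul_sum_div_insert p (by simp) hq

lemma Qprod_nonneg (p : ℕ → ℝ) (hp1 : ∀ j, p j < 1) (k n : ℕ) : 0 ≤ Qprod p k n :=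
  Finset.prod_nonneg fun j _ => by linarith [hp1 j]

lemma Rsum_le_Rsum_of_le (p : ℕ → ℝ) (hr : ∀ j, 0 ≤ p j / (1 - p j)) {k l : ℕ} (hkl : k ≤ l)
    (n : ℕ) : Rsum p l n ≤ Rsum p k n :=
  Finset.sum_le_sum_of_subset_of_nonneg (Finset.Icc_subset_Icc_left hkl) fun j _ _ => hr j

lemma le_of_one_le_Rsum (p : ℕ → ℝ) {s n : ℕ} (h : 1 ≤ Rsum p s n) : s ≤ n := by
  by_contra! hlt
  norm_num [Rsum, Finset.Icc_eq_empty_of_lt hlt] at h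

lemma Rsum_thr_add_one_le_one (p : ℕ → ℝ) (hr : ∀ j, 0 ≤ p j / (1 - p j)) (n : ℕ) :
    Rsum p (thr p n + 1) n ≤ 1 := by
  classical
  unfold thr
  split_ifs with h
  · exact (Rsum_le_Rsum_of_le p hr (Nat.le_succ 1) n).trans h
  · set s := Nat.findGreatest (fun k => 1 ≤ Rsum p k n) n
    rcases le_or_gt (s + 1) n with hsn | hsn
    · exact le_of_not_ge (Nat.findGreatest_is_greatest (Nat.lt_succ_self s) hsn)
    · simp [Rsum, Finset.Icc_eq_empty_of_lt hsn]

lemma Qprod_mul_Rsum_le_shift (p : ℕ → ℝ) (hp1 : ∀ j, p j < 1) {s n : ℕ} (hsn : s ≤ n)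
    (hps : p s ≤ p (n + 1)) (hA : Rsum p (s + 1) n ≤ 1) :
    Qprod p s n * Rsum p s n ≤ Qprod p (s + 1) (n + 1) * Rsum p (s + 1) (n + 1) := by
  have hq : ∀ j, 1 - p j ≠ 0 := fun j => by linarith [hp1 j]
  rw [Qprod_mul_Rsum_eq_of_le p hsn (hq s), Qprod_mul_Rsum_succ_right p (by omega) (hq (n + 1))]
  gcongr ?_ * ?_
  · exact Qprod_nonneg p hp1 _ _
  · nlinarith

theorem stmt_18_general (p : ℕ → ℝ) (hp0 : ∀ j, 0 < p j) (hp1 : ∀ j, p j < 1)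
    (hmono : ∀ j, p j ≤ p (j + 1)) (n s : ℕ)
    (hsn : thr p n = s) (hR : 1 ≤ Rsum p s n) :
    Qprod p s n * Rsum p s n ≤ Qprod p (s + 1) (n + 1) * Rsum p (s + 1) (n + 1) := by
  have hr : ∀ j, 0 ≤ p j / (1 - p j) := fun j => div_nonneg (hp0 j).le (by linarith [hp1 j])
  have hle : s ≤ n := le_of_one_le_Rsum p hR
  have hps : p s ≤ p (n + 1) := monotone_nat_of_le_succ hmono (by omega)
  exact Qprod_mul_Rsum_le_shift p hp1 hle hps (hsn ▸ Rsum_thr_add_one_le_one p hr n)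

theorem stmt_18 (p : ℕ → ℝ) (hp0 : ∀ j, 0 < p j) (hp1 : ∀ j, p j < 1)
    (hmono : ∀ j, p j ≤ p (j + 1)) (n s : ℕ)
    (hsn : thr p n = s) (hsn1 : thr p (n + 1) = s + 1) (hR : 1 ≤ Rsum p s n) :
    Qprod p s n * Rsum p s n ≤ Qprod p (s + 1) (n + 1) * Rsum p (s + 1) (n + 1) :=
  stmt_18_general p hp0 hp1 hmono n s hsn hR
end
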